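/- arXiv:0804.2311 — 4 statements merged into one kernel-verified Lean document; each statement's English description precedes it below -/
import Mathlib

section
/- For every s ≥ 2, the integral I(s) = ∫_ℝ |sin(y)/y|^s dy is finite, and there exist absolute constants 0 < c ≤ C < ∞ such that c·s^(−1/2) ≤ I(s) ≤ C·s^(−1/2) for all s ≥ 2. -/
/-!
Near the origin `|sinc y| ^ s` is a Gaussian bump of width `s^(-1/2)`: Taylor's bounds on `sin`
give `1 - y²/6 ≤ sinc y ≤ 1 - y²/12` for `|y| ≤ 1`, so by Bernoulli's inequality the
integrand is at least `5/6` on `[0, s^(-1/2)]`, and by `1 - t ≤ exp (-t)` it is at most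
`exp (-s y²/12)` on `[-1, 1]`. Beyond `|y| = 1` it is at most `|y|^(-s)`, contributing `O(1/s)`.
Integrability follows from `|sinc y| ^ s ≤ sinc y ^ 2 ≤ 2 / (1 + y²)`.
-/

open MeasureTheory Real Set

namespace Real

lemma sinc_abs (x : ℝ) : sinc |x| = sinc x := by
  rcases abs_choice x with h | h <;> rw [h]
  exact sinc_neg x

lemma abs_sinc_le_inv_abs {x : ℝ} (hx : x ≠ 0) : |sinc x| ≤ |x|⁻¹ := by
  rw [sinc_of_ne_zero hx, abs_div, div_eq_mul_inv]
  exact mul_le_of_le_one_left (by positivity) (abs_sin_le_one x)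

lemma one_sub_sq_div_six_le_sinc (x : ℝ) : 1 - x ^ 2 / 6 ≤ sinc x := by
  wlog hx : 0 < x generalizing x
  · rcases (not_lt.mp hx).eq_or_lt with rfl | hneg
    · simp
    · simpa using this (-x) (neg_pos.mpr hneg)
  rw [sinc_of_ne_zero hx.ne', le_div_iff₀ hx]
  nlinarith [sin_ge_sub_cube hx.le]

lemma sinc_le_one_sub_sq_div_twelve {x : ℝ} (hx : |x| ≤ 1) : sinc x ≤ 1 - x ^ 2 / 12 := by
  rcases eq_or_ne x 0 with rfl | hx0
  · simp
  have hx0' : 0 < |x| := abs_pos.mpr hx0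
  have key : |sinc x - (1 - x ^ 2 / 6)| ≤ x ^ 2 / 100 := by
    have : sinc x - (1 - x ^ 2 / 6) = (sin x - (x - x ^ 3 / 6)) / x := by
      rw [sinc_of_ne_zero hx0]; field_simp
    rw [this, abs_div, div_le_iff₀ hx0', ← sq_abs x]
    calc |sin x - (x - x ^ 3 / 6)| ≤ |x| ^ 5 / 100 := sin_bound hx
      _ ≤ |x| ^ 2 / 100 * |x| := by
        have : |x| ^ 2 ≤ 1 := pow_le_one₀ (abs_nonneg x) hx
        nlinarith [pow_pos hx0' 3]
  nlinarith [le_abs_self (sinc x - (1 - x ^ 2 / 6)), sq_nonneg x]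

lemma abs_sinc_rpow_le_exp {s x : ℝ} (hs : 0 ≤ s) (hx : |x| ≤ 1) :
    |sinc x| ^ s ≤ exp (-(s / 12) * x ^ 2) := by
  have hx2 : x ^ 2 ≤ 1 := by rw [← sq_abs]; exact pow_le_one₀ (abs_nonneg x) hx
  have hpos : 0 ≤ sinc x := by linarith [one_sub_sq_div_six_le_sinc x]
  calc |sinc x| ^ s ≤ exp (-(x ^ 2 / 12)) ^ s := by
        gcongr
        rw [abs_of_nonneg hpos]
        linarith [sinc_le_one_sub_sq_div_twelve hx, add_one_le_exp (-(x ^ 2 / 12))]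
    _ = exp (-(s / 12) * x ^ 2) := by rw [← exp_mul]; ring_nf

lemma abs_sinc_rpow_le_rpow_neg {s x : ℝ} (hs : 0 ≤ s) (hx : 0 < x) :
    |sinc x| ^ s ≤ x ^ (-s) := by
  calc |sinc x| ^ s ≤ x⁻¹ ^ s := by
        gcongr; simpa [abs_of_pos hx] using abs_sinc_le_inv_abs hx.ne'
    _ = x ^ (-s) := by rw [inv_rpow hx.le, rpow_neg hx.le]

lemma five_sixths_le_abs_sinc_rpow {s x : ℝ} (hs : 1 ≤ s) (hx : s * x ^ 2 ≤ 1) :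
    5 / 6 ≤ |sinc x| ^ s := by
  have hx2 : x ^ 2 ≤ 1 := by nlinarith [sq_nonneg x]
  calc (5 / 6 : ℝ) ≤ 1 + s * -(x ^ 2 / 6) := by linarith
    _ ≤ (1 + -(x ^ 2 / 6)) ^ s := one_add_mul_self_le_rpow_one_add (by linarith) hs
    _ ≤ |sinc x| ^ s := by
        gcongr
        · linarith
        · exact (by linarith [one_sub_sq_div_six_le_sinc x] : _ ≤ sinc x).trans (le_abs_self _)

lemma sinc_sq_le_two_mul_inv_one_add_sq (x : ℝ) : sinc x ^ 2 ≤ 2 * (1 + x ^ 2)⁻¹ := by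
  rw [← div_eq_mul_inv, le_div_iff₀ (by positivity)]
  have h1 : sinc x ^ 2 ≤ 1 := by
    rw [← sq_abs]; exact pow_le_one₀ (abs_nonneg _) (abs_sinc_le_one x)
  have h2 : sinc x ^ 2 * x ^ 2 ≤ 1 := by
    rcases eq_or_ne x 0 with rfl | hx
    · simp
    rw [sinc_of_ne_zero hx, div_pow, div_mul_cancel₀ _ (pow_ne_zero 2 hx)]
    exact sin_sq_le_one x
  nlinarith

lemma abs_sinc_rpow_le_sinc_sq {s : ℝ} (hs : 2 ≤ s) (x : ℝ) :
    |sinc x| ^ s ≤ sinc x ^ 2 := by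
  calc |sinc x| ^ s ≤ |sinc x| ^ (2 : ℝ) :=
        rpow_le_rpow_of_exponent_ge' (abs_nonneg _) (abs_sinc_le_one x) two_pos.le hs
    _ = sinc x ^ 2 := by rw [rpow_two, sq_abs]

lemma integrable_abs_sinc_rpow {s : ℝ} (hs : 2 ≤ s) : Integrable fun x ↦ |sinc x| ^ s := by
  refine (integrable_inv_one_add_sq.const_mul 2).mono'
    (continuous_sinc.abs.rpow_const fun _ ↦ Or.inr (by linarith)).aestronglyMeasurable
    (.of_forall fun x ↦ ?_)
  rw [norm_of_nonneg (by positivity)]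
  exact (abs_sinc_rpow_le_sinc_sq hs x).trans (sinc_sq_le_two_mul_inv_one_add_sq x)

lemma integral_abs_sinc_rpow_eq_two_mul (s : ℝ) :
    ∫ x, |sinc x| ^ s = 2 * ∫ x in Ioi 0, |sinc x| ^ s := by
  simpa only [sinc_abs] using integral_comp_abs (f := fun x ↦ |sinc x| ^ s)

lemma five_sixths_mul_inv_sqrt_le_setIntegral_Ioi_abs_sinc_rpow {s : ℝ} (hs : 2 ≤ s) :
    5 / 6 * (√s)⁻¹ ≤ ∫ x in Ioi 0, |sinc x| ^ s := by
  have hs0 : 0 < s := by linarith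
  calc 5 / 6 * (√s)⁻¹ = ∫ _ in Ioc 0 (√s)⁻¹, (5 / 6 : ℝ) := by
        rw [setIntegral_const, volume_real_Ioc_of_le (by positivity), smul_eq_mul, sub_zero,
          mul_comm]
    _ ≤ ∫ x in Ioc 0 (√s)⁻¹, |sinc x| ^ s := by
        refine setIntegral_mono_on (integrableOn_const (by simp))
          (integrable_abs_sinc_rpow hs).integrableOn measurableSet_Ioc fun x hx ↦ ?_
        refine five_sixths_le_abs_sinc_rpow (by linarith) ?_
        have : x ^ 2 ≤ s⁻¹ := by
          rw [← sq_sqrt hs0.le, ← inv_pow]; exact pow_le_pow_left₀ hx.1.le hx.2 2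
        calc s * x ^ 2 ≤ s * s⁻¹ := by gcongr
          _ = 1 := mul_inv_cancel₀ hs0.ne'
    _ ≤ ∫ x in Ioi 0, |sinc x| ^ s :=
        setIntegral_mono_set (integrable_abs_sinc_rpow hs).integrableOn
          (.of_forall fun _ ↦ by positivity) Ioc_subset_Ioi_self.eventuallyLE

lemma setIntegral_Ioc_abs_sinc_rpow_le {s : ℝ} (hs : 0 < s) :
    ∫ x in Ioc 0 1, |sinc x| ^ s ≤ √(π / (s / 12)) / 2 := by
  have hgauss : Integrable fun x : ℝ ↦ exp (-(s / 12) * x ^ 2) :=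
    integrable_exp_neg_mul_sq (by positivity)
  calc ∫ x in Ioc 0 1, |sinc x| ^ s ≤ ∫ x in Ioc 0 1, exp (-(s / 12) * x ^ 2) := by
        refine integral_mono_of_nonneg (.of_forall fun _ ↦ by positivity) hgauss.integrableOn
          ((ae_restrict_iff' measurableSet_Ioc).mpr (.of_forall fun x hx ↦ ?_))
        exact abs_sinc_rpow_le_exp hs.le (abs_le.mpr ⟨by linarith [hx.1], hx.2⟩)
    _ ≤ ∫ x in Ioi 0, exp (-(s / 12) * x ^ 2) :=
        setIntegral_mono_set hgauss.integrableOn (.of_forall fun _ ↦ (exp_pos _).le)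
          Ioc_subset_Ioi_self.eventuallyLE
    _ = √(π / (s / 12)) / 2 := integral_gaussian_Ioi _

lemma setIntegral_Ioi_one_abs_sinc_rpow_le {s : ℝ} (hs : 1 < s) :
    ∫ x in Ioi 1, |sinc x| ^ s ≤ 1 / (s - 1) :=
  calc ∫ x in Ioi 1, |sinc x| ^ s ≤ ∫ x in Ioi 1, x ^ (-s) := by
        refine integral_mono_of_nonneg (.of_forall fun _ ↦ by positivity)
          (integrableOn_Ioi_rpow_of_lt (by linarith) one_pos)
          ((ae_restrict_iff' measurableSet_Ioi).mpr (.of_forall fun x hx ↦ ?_))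
        exact abs_sinc_rpow_le_rpow_neg (by linarith) (one_pos.trans hx)
    _ = 1 / (s - 1) := by
        rw [integral_Ioi_rpow_of_lt (by linarith) one_pos, one_rpow, neg_add_eq_sub,
          ← neg_sub, div_neg, neg_div, neg_neg]

lemma setIntegral_Ioi_abs_sinc_rpow_le_six_mul_inv_sqrt {s : ℝ} (hs : 2 ≤ s) :
    ∫ x in Ioi 0, |sinc x| ^ s ≤ 6 * (√s)⁻¹ := by
  have hs0 : 0 < s := by linarith
  have hsqrt : 1 ≤ √s := one_le_sqrt.mpr (by linarith)
  have hcore : √(π / (s / 12)) / 2 ≤ 4 * (√s)⁻¹ := by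
    have : √(π * 12) ≤ 8 := by
      rw [sqrt_le_left (by norm_num)]; nlinarith [pi_le_four]
    calc √(π / (s / 12)) / 2 = √(π * 12) / 2 * (√s)⁻¹ := by
          rw [div_div_eq_mul_div, sqrt_div' _ hs0.le]; ring
      _ ≤ 4 * (√s)⁻¹ := by gcongr; linarith
  have htail : 1 / (s - 1) ≤ 2 * (√s)⁻¹ :=
    calc 1 / (s - 1) ≤ 2 / s := by rw [div_le_div_iff₀ (by linarith) hs0]; linarith
      _ = 2 * (√s)⁻¹ * (√s)⁻¹ := by
          rw [mul_assoc, ← mul_inv, mul_self_sqrt hs0.le, div_eq_mul_inv]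
      _ ≤ 2 * (√s)⁻¹ :=
          mul_le_of_le_one_right (by positivity) (inv_le_one_of_one_le₀ hsqrt)
  have hint := integrable_abs_sinc_rpow hs
  rw [← Ioc_union_Ioi_eq_Ioi zero_le_one, setIntegral_union Ioc_disjoint_Ioi_same
    measurableSet_Ioi hint.integrableOn hint.integrableOn]
  linarith [setIntegral_Ioc_abs_sinc_rpow_le hs0,
    setIntegral_Ioi_one_abs_sinc_rpow_le (by linarith : 1 < s)]

end Real

/-- `I(s) = ∫_ℝ |sin y / y|^s dy` is finite for `s ≥ 2` and
is two-sidedly comparable to `s^(-1/2)`. -/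
theorem sinc_power_integral_asymptotics :
    ∃ c C : ℝ, 0 < c ∧ c ≤ C ∧
      ∀ s : ℝ, 2 ≤ s →
        Integrable (fun y : ℝ => |if y = 0 then (1 : ℝ) else Real.sin y / y| ^ s) ∧
        c * s ^ (-(1 : ℝ) / 2) ≤
          (∫ y : ℝ, |if y = 0 then (1 : ℝ) else Real.sin y / y| ^ s) ∧
        (∫ y : ℝ, |if y = 0 then (1 : ℝ) else Real.sin y / y| ^ s) ≤
          C * s ^ (-(1 : ℝ) / 2) := by
  refine ⟨5 / 3, 12, by norm_num, by norm_num, fun s hs ↦ ?_⟩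
  simp only [← sinc_apply]
  rw [neg_div, rpow_neg (by linarith), ← sqrt_eq_rpow, integral_abs_sinc_rpow_eq_two_mul]
  refine ⟨integrable_abs_sinc_rpow hs, ?_, ?_⟩
  · linarith [five_sixths_mul_inv_sqrt_le_setIntegral_Ioi_abs_sinc_rpow hs]
  · linarith [setIntegral_Ioi_abs_sinc_rpow_le_six_mul_inv_sqrt hs]
end

section
/- Let (T, μ) be a measure space, let σ ≥ 1 and C > 0, let (a,b) and (c,d) be intervals with b ≤ c (so that 1 ≤ p < q ≤ ∞ for p ∈ (a,b), q ∈ (c,d)), and suppose t : T → ℝ satisfies the Nikol'skii inequality ‖t‖_{L^q} ≤ C σ^{1/p − 1/q} ‖t‖_{L^p} for all p ∈ (a,b) and q ∈ (c,d). Let X and Y be Banach function spaces whose norms are given by r.i. norms applied to the moment functions p ↦ ‖t‖_{L^p} on (c,d) and (a,b) respectively, with fundamental functions φ(X,·), φ(Y,·). Then ‖t‖_X / φ(X, 1/σ) ≤ C · ‖t‖_Y / φ(Y, 1/σ). -/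
open MeasureTheory

/-- Theorem 1: abstract Nikol'skii inequality for a pair of
moment rearrangement invariant spaces. `N₁`, `N₂` are monotone positively
homogeneous function norms on the moment intervals `(c,d)` and `(a,b)`,
`M p = (∫ |t|^p dμ)^{1/p}` is the moment function of `t`, and
`φX = N₁ (p ↦ (1/σ)^{1/p})`, `φY = N₂ (p ↦ (1/σ)^{1/p})` are the fundamental
functions at `1/σ`. -/
theorem nikolskii_mri_pair {T : Type*} [MeasurableSpace T] (μ : Measure T)
    (a b c d : ℝ) (ha : 1 ≤ a) (hab : a < b) (hbc : b ≤ c) (hcd : c < d)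
    (σ C : ℝ) (hσ : 1 ≤ σ) (hC : 0 < C)
    (t : T → ℝ) (ht : Measurable t)
    (M : ℝ → ℝ) (hM : ∀ p : ℝ, M p = (∫ x, |t x| ^ p ∂μ) ^ (1 / p))
    (hNik : ∀ p ∈ Set.Ioo a b, ∀ q ∈ Set.Ioo c d,
      M q * σ ^ (-(1 / p)) ≤ C * (M p * σ ^ (-(1 / q))))
    (N₁ N₂ : (ℝ → ℝ) → ℝ)
    (hN₁mono : ∀ g h : ℝ → ℝ,
      (∀ q ∈ Set.Ioo c d, 0 ≤ g q ∧ g q ≤ h q) → N₁ g ≤ N₁ h)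
    (hN₂mono : ∀ g h : ℝ → ℝ,
      (∀ p ∈ Set.Ioo a b, 0 ≤ g p ∧ g p ≤ h p) → N₂ g ≤ N₂ h)
    (hN₁hom : ∀ k : ℝ, 0 ≤ k → ∀ g : ℝ → ℝ, N₁ (fun q => k * g q) = k * N₁ g)
    (hN₂hom : ∀ k : ℝ, 0 ≤ k → ∀ g : ℝ → ℝ, N₂ (fun p => k * g p) = k * N₂ g)
    (φX φY : ℝ)
    (hφX : φX = N₁ (fun q => (1 / σ) ^ (1 / q)))
    (hφY : φY = N₂ (fun p => (1 / σ) ^ (1 / p)))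
    (hφXpos : 0 < φX) (hφYpos : 0 < φY) :
    N₁ M / φX ≤ C * (N₂ M / φY) := by

  have hσ0 : (0:ℝ) < σ := lt_of_lt_of_le one_pos hσ
  have hinv : ∀ x : ℝ, (1 / σ) ^ x = σ ^ (-x) := fun x => by
    rw [one_div, Real.inv_rpow hσ0.le, ← Real.rpow_neg hσ0.le]
  have hMnn : ∀ p : ℝ, 0 ≤ M p := fun p => by
    rw [hM]
    exact Real.rpow_nonneg
      (integral_nonneg fun x => Real.rpow_nonneg (abs_nonneg _) _) _
  have hN₁M0 : 0 ≤ N₁ M := by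
    have h0 := hN₁mono (fun q => 0 * M q) M (fun q _ => by simp [hMnn q])
    rwa [hN₁hom 0 le_rfl M, zero_mul] at h0
  have hφX' : φX = N₁ (fun q => σ ^ (-(1 / q))) := by
    rw [hφX]; congr 1; funext q; exact hinv _
  have stepA : ∀ p ∈ Set.Ioo a b, N₁ M / φX * (1 / σ) ^ (1 / p) ≤ C * M p := by
    intro p hp
    have h1 : N₁ (fun q => σ ^ (-(1 / p)) * M q)
        ≤ N₁ (fun q => (C * M p) * σ ^ (-(1 / q))) := by
      apply hN₁mono
      intro q hq
      refine ⟨mul_nonneg (Real.rpow_nonneg hσ0.le _) (hMnn q), ?_⟩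
      rw [mul_comm (σ ^ (-(1 / p))) (M q), mul_assoc]
      exact hNik p hp q hq
    rw [hN₁hom _ (Real.rpow_nonneg hσ0.le _) M,
        hN₁hom _ (mul_nonneg hC.le (hMnn p)) _, ← hφX'] at h1
    rw [hinv, div_mul_eq_mul_div, div_le_iff₀ hφXpos, mul_comm (N₁ M)]
    exact h1
  have h2 : N₂ (fun p => (N₁ M / φX) * (1 / σ) ^ (1 / p)) ≤ N₂ (fun p => C * M p) := by
    apply hN₂mono
    intro p hp
    exact ⟨mul_nonneg (div_nonneg hN₁M0 hφXpos.le)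
      (Real.rpow_nonneg (by positivity) _), stepA p hp⟩
  rw [hN₂hom _ (div_nonneg hN₁M0 hφXpos.le) _, hN₂hom C hC.le M, ← hφY] at h2
  rw [← mul_div_assoc, le_div_iff₀ hφYpos]
  exact h2
end

section
/- Let a ≥ 1, b > a, β > 0, and ψ(p) = (b − p)^{−β} for p near b. Then as δ → 0+, the fundamental function φ(δ) = sup_{p ∈ (a,b)} δ^{1/p} (b−p)^{β} satisfies φ(δ) ∼ (β b²/e)^{β} · δ^{1/b} · |log δ|^{−β}. -/
open Filter Topology Real Set

/-!
Write `L = -log δ` and `g(p) = -L/p + β log (b - p)`, so that the integrand is `exp (g p)`.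
The function `g` is concave, and its tangent line at `q = b - βb²/L` has slope `L/q² - L/b²`;
since `p < b`, the tangent line bounds `g` on `(a, b)` by `g q + βb²/q² - β`. Hence the
supremum lies between `exp (g q)` and `exp (βb²/q² - β) exp (g q)`, and a direct computation
gives `exp (g q) = exp (β - βb/q) (βb²/e)^β δ^{1/b} L^{-β}`. Both extra factors tend to `1`
as `q → b`.
-/

noncomputable def fundamentalFunction (a b β δ : ℝ) : ℝ :=
  ⨆ p : Ioo a b, δ ^ (1 / (p : ℝ)) * (b - (p : ℝ)) ^ β

noncomputable def fundamentalAsymptote (b β δ : ℝ) : ℝ :=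
  (β * b ^ 2 / exp 1) ^ β * δ ^ (1 / b) * |log δ| ^ (-β)

lemma one_div_sub_one_div_le {p q : ℝ} (hp : 0 < p) (hq : 0 < q) :
    1 / q - 1 / p ≤ (p - q) / q ^ 2 := by
  have h : (p - q) / q ^ 2 - (1 / q - 1 / p) = (p - q) ^ 2 / (p * q ^ 2) := by
    field_simp
  have : 0 ≤ (p - q) ^ 2 / (p * q ^ 2) := by positivity
  linarith

lemma log_sub_log_le_div {x y : ℝ} (hx : 0 < x) (hy : 0 < y) :
    log x - log y ≤ (x - y) / y := by
  have h := log_le_sub_one_of_pos (div_pos hx hy)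
  rw [log_div hx.ne' hy.ne'] at h
  have : x / y - 1 = (x - y) / y := by field_simp
  linarith

section Tangent

variable {L β b p q : ℝ}

lemma neg_div_add_mul_log_le_tangent (hL : 0 ≤ L) (hβ : 0 ≤ β) (hp : 0 < p) (hpb : p < b)
    (hq : 0 < q) (hqb : q < b) :
    -L / p + β * log (b - p) ≤
      -L / q + β * log (b - q) + (p - q) * (L / q ^ 2 - β / (b - q)) := by
  have hinv := mul_le_mul_of_nonneg_left (one_div_sub_one_div_le hp hq) hL
  have hlog := mul_le_mul_of_nonneg_left
    (log_sub_log_le_div (sub_pos.2 hpb) (sub_pos.2 hqb)) hβ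
  have e1 : L * (1 / q - 1 / p) = -L / p - -L / q := by ring
  have e2 : L * ((p - q) / q ^ 2) = (p - q) * (L / q ^ 2) := by ring
  have e3 : β * ((b - p - (b - q)) / (b - q)) = -((p - q) * (β / (b - q))) := by ring
  linarith

/-- At the critical point `L (b - q) = βb²` the tangent slope is `L (1/q² - 1/b²) ≥ 0`. -/
lemma neg_div_add_mul_log_le_critical (hL : 0 ≤ L) (hβ : 0 ≤ β) (hp : 0 < p) (hpb : p < b)
    (hq : 0 < q) (hqb : q < b) (hcrit : L * (b - q) = β * b ^ 2) :
    -L / p + β * log (b - p) ≤ -L / q + β * log (b - q) + (β * b ^ 2 / q ^ 2 - β) := by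
  have hb : 0 < b := hq.trans hqb
  have hslope : L / q ^ 2 - β / (b - q) = L * (1 / q ^ 2 - 1 / b ^ 2) := by
    rw [show β / (b - q) = L / b ^ 2 by
      rw [div_eq_div_iff (sub_pos.2 hqb).ne' (by positivity)]; linarith]
    ring
  have hslope_nonneg : 0 ≤ L * (1 / q ^ 2 - 1 / b ^ 2) := by
    have : 1 / b ^ 2 ≤ 1 / q ^ 2 := one_div_le_one_div_of_le (by positivity) (by nlinarith)
    exact mul_nonneg hL (by linarith)
  calc -L / p + β * log (b - p)
      ≤ -L / q + β * log (b - q) + (p - q) * (L * (1 / q ^ 2 - 1 / b ^ 2)) := by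
        rw [← hslope]; exact neg_div_add_mul_log_le_tangent hL hβ hp hpb hq hqb
    _ ≤ -L / q + β * log (b - q) + (b - q) * (L * (1 / q ^ 2 - 1 / b ^ 2)) := by
        gcongr
    _ = -L / q + β * log (b - q) + (β * b ^ 2 / q ^ 2 - β) := by
        rw [← mul_assoc, mul_comm (b - q), hcrit]
        field_simp

end Tangent

section Critical

variable {a b β δ q : ℝ}

lemma rpow_mul_rpow_eq_exp (hδ : 0 < δ) (hqb : q < b) :
    δ ^ (1 / q) * (b - q) ^ β = exp (-(-log δ) / q + β * log (b - q)) := by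
  rw [rpow_def_of_pos hδ, rpow_def_of_pos (sub_pos.2 hqb), ← exp_add]
  ring_nf

lemma rpow_mul_rpow_le_of_critical {p : ℝ} (hδ0 : 0 < δ) (hδ1 : δ ≤ 1) (hβ : 0 ≤ β)
    (hp : 0 < p) (hpb : p < b) (hq : 0 < q) (hqb : q < b)
    (hcrit : -log δ * (b - q) = β * b ^ 2) :
    δ ^ (1 / p) * (b - p) ^ β ≤
      exp (β * b ^ 2 / q ^ 2 - β) * (δ ^ (1 / q) * (b - q) ^ β) := by
  rw [rpow_mul_rpow_eq_exp hδ0 hpb, rpow_mul_rpow_eq_exp hδ0 hqb, ← exp_add, exp_le_exp]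
  have hL : 0 ≤ -log δ := neg_nonneg.2 (log_nonpos hδ0.le hδ1)
  linarith [neg_div_add_mul_log_le_critical hL hβ hp hpb hq hqb hcrit]

lemma rpow_mul_rpow_critical_eq (hδ0 : 0 < δ) (hδ1 : δ < 1) (hβ : 0 < β) (hq : 0 < q)
    (hqb : q < b) (hcrit : -log δ * (b - q) = β * b ^ 2) :
    δ ^ (1 / q) * (b - q) ^ β =
      exp (β - β * b / q) * fundamentalAsymptote b β δ := by
  unfold fundamentalAsymptote
  set L := -log δ
  have hL : 0 < L := neg_pos.2 (log_neg hδ0 hδ1)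
  have hb : 0 < b := hq.trans hqb
  have hbq : b - q = β * b ^ 2 / L := by rw [← hcrit]; field_simp
  have habs : |log δ| = L := by rw [abs_of_neg (log_neg hδ0 hδ1)]
  rw [habs, rpow_def_of_pos hδ0, rpow_def_of_pos hδ0, rpow_def_of_pos (sub_pos.2 hqb),
    rpow_def_of_pos (by positivity), rpow_def_of_pos hL, ← exp_add, ← exp_add, ← exp_add,
    ← exp_add, hbq, log_div (by positivity) hL.ne', log_div (by positivity) (exp_pos 1).ne',
    log_exp]
  congr 1
  have hq_eq : q = b - β * b ^ 2 / L := by linarith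
  field_simp
  rw [hq_eq]
  field_simp
  ring

lemma le_fundamentalFunction (hδ0 : 0 < δ) (hδ1 : δ ≤ 1) (ha : 0 ≤ a) (hβ : 0 ≤ β)
    (haq : a < q) (hqb : q < b) (hcrit : -log δ * (b - q) = β * b ^ 2) :
    δ ^ (1 / q) * (b - q) ^ β ≤ fundamentalFunction a b β δ := by
  refine le_ciSup_of_le ⟨exp (β * b ^ 2 / q ^ 2 - β) * (δ ^ (1 / q) * (b - q) ^ β), ?_⟩
    (⟨q, haq, hqb⟩ : Ioo a b) le_rfl
  rintro _ ⟨p, rfl⟩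
  exact rpow_mul_rpow_le_of_critical hδ0 hδ1 hβ (ha.trans_lt p.2.1) p.2.2
    (ha.trans_lt haq) hqb hcrit

lemma fundamentalFunction_le (hδ0 : 0 < δ) (hδ1 : δ ≤ 1) (ha : 0 ≤ a) (hβ : 0 ≤ β)
    (haq : a < q) (hqb : q < b) (hcrit : -log δ * (b - q) = β * b ^ 2) :
    fundamentalFunction a b β δ ≤
      exp (β * b ^ 2 / q ^ 2 - β) * (δ ^ (1 / q) * (b - q) ^ β) :=
  haveI : Nonempty (Ioo a b) := ⟨⟨q, haq, hqb⟩⟩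
  ciSup_le fun p => rpow_mul_rpow_le_of_critical hδ0 hδ1 hβ (ha.trans_lt p.2.1) p.2.2
    (ha.trans_lt haq) hqb hcrit

lemma fundamentalFunction_div_fundamentalAsymptote_mem_Icc (hδ0 : 0 < δ) (hδ1 : δ < 1)
    (ha : 0 ≤ a) (hβ : 0 < β) (haq : a < q) (hqb : q < b)
    (hcrit : -log δ * (b - q) = β * b ^ 2) :
    fundamentalFunction a b β δ / fundamentalAsymptote b β δ ∈
      Icc (exp (β - β * b / q)) (exp (β - β * b / q) * exp (β * b ^ 2 / q ^ 2 - β)) := by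
  have hq : 0 < q := ha.trans_lt haq
  have hval := rpow_mul_rpow_critical_eq hδ0 hδ1 hβ hq hqb hcrit
  have hT : 0 < fundamentalAsymptote b β δ := by
    have : 0 < δ ^ (1 / q) * (b - q) ^ β := by
      have := sub_pos.2 hqb
      positivity
    exact pos_of_mul_pos_right (hval ▸ this) (exp_pos _).le
  rw [mem_Icc, le_div_iff₀ hT, div_le_iff₀ hT, ← hval]
  refine ⟨le_fundamentalFunction hδ0 hδ1.le ha hβ.le haq hqb hcrit, ?_⟩
  calc fundamentalFunction a b β δ
      ≤ exp (β * b ^ 2 / q ^ 2 - β) * (δ ^ (1 / q) * (b - q) ^ β) :=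
        fundamentalFunction_le hδ0 hδ1.le ha hβ.le haq hqb hcrit
    _ = _ := by rw [hval]; ring

end Critical

lemma tendsto_sub_div_neg_log (b c : ℝ) :
    Tendsto (fun δ => b - c / -log δ) (𝓝[Ioo 0 1] 0) (𝓝 b) := by
  have hL : Tendsto (fun δ => -log δ) (𝓝[Ioo 0 1] 0) atTop :=
    tendsto_neg_atBot_atTop.comp
      (tendsto_log_nhdsGT_zero.mono_left (nhdsWithin_mono 0 Ioo_subset_Ioi_self))
  simpa using tendsto_const_nhds.sub (tendsto_const_nhds.div_atTop hL)

section Limits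

variable {α : Type*} {l : Filter α} {b β : ℝ} {q : α → ℝ}

lemma tendsto_exp_sub_mul_div (hb : b ≠ 0) (hq : Tendsto q l (𝓝 b)) :
    Tendsto (fun x => exp (β - β * b / q x)) l (𝓝 1) := by
  have := ((tendsto_const_nhds (x := β)).sub ((tendsto_const_nhds (x := β * b)).div hq hb)).rexp
  rwa [mul_div_cancel_right₀ _ hb, sub_self, exp_zero] at this

lemma tendsto_exp_mul_sq_div_sq_sub (hb : b ≠ 0) (hq : Tendsto q l (𝓝 b)) :
    Tendsto (fun x => exp (β * b ^ 2 / q x ^ 2 - β)) l (𝓝 1) := by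
  have := (((tendsto_const_nhds (x := β * b ^ 2)).div (hq.pow 2) (pow_ne_zero 2 hb)).sub
    (tendsto_const_nhds (x := β))).rexp
  rwa [mul_div_cancel_right₀ _ (pow_ne_zero 2 hb), sub_self, exp_zero] at this

end Limits

/-- asymptotics of the fundamental function
`φ(δ) = sup_{p ∈ (a,b)} δ^{1/p}(b−p)^β ∼ (βb²/e)^β δ^{1/b} |log δ|^{−β}`
as `δ → 0⁺`. -/
theorem fundamental_function_asymptotics_finite_b (a b β : ℝ)
    (ha : 1 ≤ a) (hab : a < b) (hβ : 0 < β) :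
    Tendsto (fun δ : ℝ =>
        (⨆ p : Set.Ioo a b, δ ^ (1 / (p : ℝ)) * (b - (p : ℝ)) ^ β) /
          ((β * b ^ 2 / Real.exp 1) ^ β * δ ^ (1 / b) * |Real.log δ| ^ (-β)))
      (nhdsWithin 0 (Set.Ioo 0 1)) (nhds 1) := by
  have hb : 0 < b := by linarith
  set q : ℝ → ℝ := fun δ => b - β * b ^ 2 / -log δ
  have hq : Tendsto q (𝓝[Ioo 0 1] 0) (𝓝 b) := tendsto_sub_div_neg_log b (β * b ^ 2)
  have hlo := tendsto_exp_sub_mul_div (β := β) hb.ne' hq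
  have hhi := hlo.mul (tendsto_exp_mul_sq_div_sq_sub (β := β) hb.ne' hq)
  rw [mul_one] at hhi
  have hbounds : ∀ᶠ δ in 𝓝[Ioo 0 1] 0,
      fundamentalFunction a b β δ / fundamentalAsymptote b β δ ∈
        Icc (exp (β - β * b / q δ))
          (exp (β - β * b / q δ) * exp (β * b ^ 2 / q δ ^ 2 - β)) := by
    filter_upwards [eventually_mem_nhdsWithin, hq.eventually (lt_mem_nhds hab)]
      with δ ⟨hδ0, hδ1⟩ haq
    have hL : 0 < -log δ := neg_pos.2 (log_neg hδ0 hδ1)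
    refine fundamentalFunction_div_fundamentalAsymptote_mem_Icc hδ0 hδ1 (by linarith) hβ haq
      (sub_lt_self b (by positivity)) ?_
    rw [sub_sub_cancel, mul_div_cancel₀ _ hL.ne']
  exact tendsto_of_tendsto_of_tendsto_of_le_of_le' hlo hhi
    (hbounds.mono fun _ h => h.1) (hbounds.mono fun _ h => h.2)
end

section
/- Let φ : [0,∞) → [0,∞) be continuous, nondecreasing, concave with φ(0) = 0, and suppose φ satisfies: for all ε > 0, ∫_0^{1/4} φ(ε G(λ)) dλ ≤ φ(C ε) for some constant C, where G(λ) = m{y : sin²(y/2)/y² > λ}. Then the Lorentz norm of D_n(x) = sin²(nx/2)/(n²x²), defined by ‖D_n‖_{Λ(φ)} = ∫_0^∞ φ(m{x : D_n(x) > λ}) dλ, satisfies c φ(1/n) ≤ ‖D_n‖_{Λ(φ)} ≤ φ(C/n) for an absolute constant c (the lower bound from concavity and φ(κ/n) ≥ min(κ,1)φ(1/n)). -/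
/-!
Write `D(y) = sin²(y/2)/y²`, so that `D_n(x) = D(n x)` and, by scaling, the distribution function
of `D_n` is `G(λ)/n`. Since `D ≤ 1/4`, the Lorentz norm is `∫_0^{1/4} φ(G(λ)/n) dλ`, which is at most
`φ(C/n)` by the hypothesis at `ε = 1/n`. Conversely `D > 1/8` on `(-1, 1)`, so `G ≥ 2` on `(0, 1/8)`
and the norm is at least `φ(2/n)/8 ≥ φ(1/n)/8`. Integrability of the integrand comes from
`G(λ) ≤ 2 λ^{-1/2}` together with the at most linear growth of a concave `φ`.
-/

open MeasureTheory Set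
open scoped ENNReal

noncomputable def fejerKernel (y : ℝ) : ℝ :=
  if y = 0 then 1 / 4 else Real.sin (y / 2) ^ 2 / y ^ 2

lemma fejerKernel_mul {a : ℝ} (ha : a ≠ 0) (x : ℝ) :
    fejerKernel (a * x) =
      if x = 0 then 1 / 4 else Real.sin (a * x / 2) ^ 2 / (a ^ 2 * x ^ 2) := by
  simp [fejerKernel, ha, mul_pow]

lemma fejerKernel_le_quarter (y : ℝ) : fejerKernel y ≤ 1 / 4 := by
  unfold fejerKernel
  split_ifs with hy
  · exact le_rfl
  · have hsin : Real.sin (y / 2) ^ 2 ≤ (y / 2) ^ 2 := by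
      simpa only [sq_abs] using pow_le_pow_left₀ (abs_nonneg _) Real.abs_sin_le_abs 2
    rw [div_le_iff₀ (by positivity)]
    linarith

lemma eighth_lt_fejerKernel {y : ℝ} (hy : |y| < 1) : 1 / 8 < fejerKernel y := by
  unfold fejerKernel
  split_ifs with h0
  · norm_num
  · set t := |y| / 2 with ht
    have ht0 : 0 < t := by positivity
    have hsin : 23 / 24 * t ≤ Real.sin t := by
      nlinarith [Real.sin_gt_sub_cube ht0, mul_pos ht0 ht0, abs_nonneg y]
    have hsq : Real.sin (y / 2) ^ 2 = Real.sin t ^ 2 := by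
      rcases abs_choice y with h | h <;> simp [ht, h, neg_div, Real.sin_neg]
    rw [lt_div_iff₀ (by positivity), hsq, ← sq_abs y]
    nlinarith

lemma sq_le_inv_of_lt_fejerKernel {l y : ℝ} (hl : 0 < l) (h : l < fejerKernel y) :
    y ^ 2 ≤ l⁻¹ := by
  unfold fejerKernel at h
  split_ifs at h with h0
  · simp [h0, hl.le]
  · rw [lt_div_iff₀ (by positivity)] at h
    rw [le_inv_comm₀ (by positivity) hl, inv_eq_one_div, le_div_iff₀ (by positivity)]
    nlinarith [Real.sin_sq_le_one (y / 2)]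

noncomputable def fejerDistrib (l : ℝ) : ℝ :=
  volume.real {y | l < fejerKernel y}

lemma fejerDistrib_nonneg (l : ℝ) : 0 ≤ fejerDistrib l := measureReal_nonneg

lemma measurable_fejerDistrib : Measurable fejerDistrib := by
  have : Antitone fun l => volume {y | l < fejerKernel y} :=
    fun _ _ hab => measure_mono fun _ hy => lt_of_le_of_lt hab hy
  exact this.measurable.ennreal_toReal

lemma setOf_lt_fejerKernel_subset_Icc {l : ℝ} (hl : 0 < l) :
    {y | l < fejerKernel y} ⊆ Icc (-√l⁻¹) √l⁻¹ := fun _ hy =>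
  abs_le.1 (Real.abs_le_sqrt (sq_le_inv_of_lt_fejerKernel hl hy))

lemma volume_lt_fejerKernel_ne_top {l : ℝ} (hl : 0 < l) : volume {y | l < fejerKernel y} ≠ ∞ :=
  ((measure_mono (setOf_lt_fejerKernel_subset_Icc hl)).trans_lt measure_Icc_lt_top).ne

lemma fejerDistrib_le {l : ℝ} (hl : 0 < l) : fejerDistrib l ≤ 2 * l ^ (-(1 / 2) : ℝ) := by
  calc fejerDistrib l ≤ volume.real (Icc (-√l⁻¹) √l⁻¹) :=
        measureReal_mono (setOf_lt_fejerKernel_subset_Icc hl) measure_Icc_lt_top.ne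
    _ = 2 * l ^ (-(1 / 2) : ℝ) := by
      rw [Real.volume_real_Icc, Real.sqrt_inv, Real.sqrt_eq_rpow, Real.rpow_neg hl.le]
      rw [sub_neg_eq_add, ← two_mul, max_eq_left (by positivity)]

lemma fejerDistrib_eq_zero {l : ℝ} (hl : 1 / 4 ≤ l) : fejerDistrib l = 0 := by
  have : {y | l < fejerKernel y} = ∅ :=
    eq_empty_of_forall_notMem fun y hy => (hl.trans_lt hy).not_ge (fejerKernel_le_quarter y)
  simp [fejerDistrib, this]

lemma two_le_fejerDistrib {l : ℝ} (h0 : 0 < l) (hl : l < 1 / 8) : 2 ≤ fejerDistrib l := by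
  have hsub : Ioo (-1) 1 ⊆ {y | l < fejerKernel y} := fun y hy =>
    hl.trans (eighth_lt_fejerKernel (abs_lt.2 hy))
  calc (2 : ℝ) = volume.real (Ioo (-1 : ℝ) 1) := by simp; norm_num
    _ ≤ fejerDistrib l := measureReal_mono hsub (volume_lt_fejerKernel_ne_top h0)

lemma volume_real_lt_fejerKernel_mul {a : ℝ} (ha : 0 < a) (l : ℝ) :
    volume.real {x | l < fejerKernel (a * x)} = a⁻¹ * fejerDistrib l := by
  change volume.real ((a * ·) ⁻¹' {y | l < fejerKernel y}) = _
  rw [measureReal_def, Real.volume_preimage_mul_left ha.ne', ENNReal.toReal_mul,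
    ENNReal.toReal_ofReal (by positivity), abs_of_pos (inv_pos.2 ha)]
  rfl

lemma ConcaveOn.le_mul_of_one_le {φ : ℝ → ℝ} (hconc : ConcaveOn ℝ (Ici 0) φ) (h0 : 0 ≤ φ 0)
    {t : ℝ} (ht : 1 ≤ t) : φ t ≤ t * φ 1 := by
  have ht0 : 0 < t := one_pos.trans_le ht
  have key := hconc.2 (mem_Ici.2 le_rfl) ht0.le (sub_nonneg.2 (inv_le_one_of_one_le₀ ht))
    (inv_nonneg.2 ht0.le) (sub_add_cancel 1 t⁻¹)
  rw [smul_eq_mul, smul_eq_mul, smul_eq_mul, smul_eq_mul, mul_zero, zero_add,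
    inv_mul_cancel₀ ht0.ne'] at key
  rw [← div_le_iff₀' ht0, div_eq_inv_mul]
  nlinarith [sub_nonneg.2 (inv_le_one_of_one_le₀ ht)]

section LorentzIntegrand

variable {φ : ℝ → ℝ} {ε : ℝ}

lemma comp_fejerDistrib_nonneg (hmono : Monotone φ) (h0 : φ 0 = 0) (hε : 0 ≤ ε) (l : ℝ) :
    0 ≤ φ (ε * fejerDistrib l) :=
  h0 ▸ hmono (mul_nonneg hε (fejerDistrib_nonneg l))

lemma integrableOn_comp_fejerDistrib (hmono : Monotone φ) (hconc : ConcaveOn ℝ (Ici 0) φ)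
    (h0 : φ 0 = 0) (hε : 0 ≤ ε) : IntegrableOn (fun l => φ (ε * fejerDistrib l)) (Ioi 0) := by
  have hzero : EqOn (fun l => φ (ε * fejerDistrib l)) 0 (Ici (1 / 4)) := fun l hl => by
    simp only [fejerDistrib_eq_zero hl, mul_zero, h0, Pi.zero_apply]
  rw [← Ioo_union_Ici_eq_Ioi (by norm_num : (0 : ℝ) < 1 / 4)]
  refine IntegrableOn.union ?_ ((integrableOn_congr_fun hzero measurableSet_Ici).2 integrableOn_zero)
  have hrpow : IntegrableOn (fun l : ℝ => l ^ (-(1 / 2) : ℝ)) (Ioo 0 (1 / 4)) :=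
    (intervalIntegral.integrableOn_Ioo_rpow_iff (by norm_num)).2 (by norm_num)
  have hdom : IntegrableOn (fun l : ℝ => φ 1 * (1 + ε * (2 * l ^ (-(1 / 2) : ℝ)))) (Ioo 0 (1 / 4)) :=
    ((integrableOn_const measure_Ioo_lt_top.ne).add ((hrpow.const_mul 2).const_mul ε)).const_mul _
  refine hdom.mono' (hmono.measurable.comp (measurable_fejerDistrib.const_mul ε)).aestronglyMeasurable
    ((ae_restrict_iff' measurableSet_Ioo).2 (.of_forall fun l hl => ?_))
  have hbound : ε * fejerDistrib l ≤ ε * (2 * l ^ (-(1 / 2) : ℝ)) :=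
    mul_le_mul_of_nonneg_left (fejerDistrib_le hl.1) hε
  rw [Real.norm_of_nonneg (comp_fejerDistrib_nonneg hmono h0 hε l), mul_comm (φ 1)]
  -- monotonicity moves the argument above `1`, where concavity gives linear growth
  calc φ (ε * fejerDistrib l) ≤ φ (1 + ε * (2 * l ^ (-(1 / 2) : ℝ))) := hmono (by linarith)
    _ ≤ _ := hconc.le_mul_of_one_le h0.ge (le_add_of_nonneg_right
      (mul_nonneg hε (mul_nonneg zero_le_two (Real.rpow_nonneg hl.1.le _))))

lemma setIntegral_Ioi_comp_fejerDistrib (h0 : φ 0 = 0) :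
    ∫ l in Ioi 0, φ (ε * fejerDistrib l) = ∫ l in Ioo 0 (1 / 4), φ (ε * fejerDistrib l) :=
  setIntegral_eq_of_subset_of_forall_sdiff_eq_zero measurableSet_Ioi Ioo_subset_Ioi_self
    fun l hl => by rw [fejerDistrib_eq_zero (not_lt.1 fun h => hl.2 ⟨hl.1, h⟩), mul_zero, h0]

lemma le_setIntegral_Ioi_comp_fejerDistrib (hmono : Monotone φ) (hconc : ConcaveOn ℝ (Ici 0) φ)
    (h0 : φ 0 = 0) (hε : 0 ≤ ε) : 1 / 8 * φ ε ≤ ∫ l in Ioi 0, φ (ε * fejerDistrib l) := by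
  have hint := integrableOn_comp_fejerDistrib hmono hconc h0 hε
  calc 1 / 8 * φ ε = ∫ _ in Ioo 0 (1 / 8), φ ε := by simp
    _ ≤ ∫ l in Ioo 0 (1 / 8), φ (ε * fejerDistrib l) :=
      setIntegral_mono_on (integrableOn_const measure_Ioo_lt_top.ne)
        (hint.mono_set Ioo_subset_Ioi_self) measurableSet_Ioo fun l hl =>
          hmono (by nlinarith [two_le_fejerDistrib hl.1 hl.2])
    _ ≤ ∫ l in Ioi 0, φ (ε * fejerDistrib l) :=
      setIntegral_mono_set hint
        ((ae_restrict_iff' measurableSet_Ioi).2 (.of_forall fun l _ =>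
          comp_fejerDistrib_nonneg hmono h0 hε l))
        Ioo_subset_Ioi_self.eventuallyLE

end LorentzIntegrand

theorem fejer_lorentz_norm_two_sided_general
    (φ : ℝ → ℝ) (hφmono : Monotone φ)
    (hφconc : ConcaveOn ℝ (Set.Ici 0) φ) (hφ0 : φ 0 = 0)
    (G : ℝ → ℝ≥0∞)
    (hG : ∀ l : ℝ, G l = volume {y : ℝ |
      (if y = 0 then (1 / 4 : ℝ) else (Real.sin (y / 2)) ^ 2 / y ^ 2) > l})
    (C : ℝ)
    (hcond : ∀ ε : ℝ, 0 < ε →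
      ∫ l in Set.Ioo (0 : ℝ) (1 / 4), φ (ε * (G l).toReal) ≤ φ (C * ε)) :
    ∃ c : ℝ, 0 < c ∧ ∀ n : ℕ, 1 ≤ n →
      c * φ (1 / n) ≤
        (∫ l in Set.Ioi (0 : ℝ),
          φ ((volume {x : ℝ | (if x = 0 then (1 / 4 : ℝ)
            else (Real.sin (n * x / 2)) ^ 2 / ((n : ℝ) ^ 2 * x ^ 2)) > l}).toReal)) ∧
      (∫ l in Set.Ioi (0 : ℝ),
          φ ((volume {x : ℝ | (if x = 0 then (1 / 4 : ℝ)
            else (Real.sin (n * x / 2)) ^ 2 / ((n : ℝ) ^ 2 * x ^ 2)) > l}).toReal)) ≤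
        φ (C / n) := by
  have hGD : ∀ l, (G l).toReal = fejerDistrib l := fun l => by rw [hG]; rfl
  simp only [hGD] at hcond
  refine ⟨1 / 8, by norm_num, fun n hn => ?_⟩
  have hn0 : (0 : ℝ) < n := by exact_mod_cast hn
  simp_rw [← fejerKernel_mul hn0.ne', gt_iff_lt, ← measureReal_def,
    volume_real_lt_fejerKernel_mul hn0, one_div (n : ℝ)]
  refine ⟨le_setIntegral_Ioi_comp_fejerDistrib hφmono hφconc hφ0 (inv_pos.2 hn0).le, ?_⟩
  rw [setIntegral_Ioi_comp_fejerDistrib hφ0, div_eq_mul_inv]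
  exact hcond _ (inv_pos.2 hn0)

/-- if the quasi-concave function `φ` satisfies condition (19),
then the Lorentz norm of the Fejér kernel `D_n` is two-sidedly comparable to
`φ` at `1/n`: `c φ(1/n) ≤ ‖D_n‖_{Λ(φ)} ≤ φ(C/n)`. -/
theorem fejer_lorentz_norm_two_sided
    (φ : ℝ → ℝ) (hφc : Continuous φ) (hφmono : Monotone φ)
    (hφconc : ConcaveOn ℝ (Set.Ici 0) φ) (hφ0 : φ 0 = 0)
    (hφnonneg : ∀ t, 0 ≤ φ t)
    (G : ℝ → ℝ≥0∞)
    (hG : ∀ l : ℝ, G l = volume {y : ℝ |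
      (if y = 0 then (1 / 4 : ℝ) else (Real.sin (y / 2)) ^ 2 / y ^ 2) > l})
    (C : ℝ) (hC : 0 < C)
    (hcond : ∀ ε : ℝ, 0 < ε →
      ∫ l in Set.Ioo (0 : ℝ) (1 / 4), φ (ε * (G l).toReal) ≤ φ (C * ε)) :
    ∃ c : ℝ, 0 < c ∧ ∀ n : ℕ, 1 ≤ n →
      c * φ (1 / n) ≤
        (∫ l in Set.Ioi (0 : ℝ),
          φ ((volume {x : ℝ | (if x = 0 then (1 / 4 : ℝ)
            else (Real.sin (n * x / 2)) ^ 2 / ((n : ℝ) ^ 2 * x ^ 2)) > l}).toReal)) ∧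
      (∫ l in Set.Ioi (0 : ℝ),
          φ ((volume {x : ℝ | (if x = 0 then (1 / 4 : ℝ)
            else (Real.sin (n * x / 2)) ^ 2 / ((n : ℝ) ^ 2 * x ^ 2)) > l}).toReal)) ≤
        φ (C / n) :=
  fejer_lorentz_norm_two_sided_general φ hφmono hφconc hφ0 G hG C hcond
end
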